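/- arXiv:1110.3564 — 2 statements merged into one kernel-verified Lean document; each statement's English description precedes it below -/
import Mathlib

section
/- Let p be a random variable on [0,1] with E[(2p−1)²] = q, let p̄ = 1−p, and let r̂ be a positive integer. Then for all real z with |z| ≤ 1/(2r̂), E[p·(p·e^z + p̄·e^{−z})^{r̂} + p̄·(p̄·e^z + p·e^{−z})^{r̂}] ≤ e^{q·r̂·z + (1/2)(3q·r̂² + r̂)z²}. -/
/-!
Write `s = 2p - 1`. The base `p e^z + (1 - p) e^{-z}` is the moment generating function of a
`±1`-valued variable with mean `s`, so Hoeffding's lemma bounds it by `e^{sz + z²/2}`, and the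
other base by `e^{-sz + z²/2}`. Raising to the power `r̂` leaves
`e^{r̂z²/2} (p e^{u} + (1 - p) e^{-u})` with `u = s r̂ z`, and as `|u| ≤ 1`, the bound
`e^u ≤ 1 + u + u²` makes this at most `e^{r̂z²/2} (1 + s² (r̂z + r̂²z²))`. Taking expectations
gives `e^{r̂z²/2} (1 + q (r̂z + r̂²z²)) ≤ e^{r̂z²/2 + q (r̂z + r̂²z²)}`, which is at most the
claimed bound because `q ≥ 0`.
-/

open MeasureTheory ProbabilityTheory Real

noncomputable def signMeasure (p : ℝ) : Measure ℝ :=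
  ENNReal.ofReal p • Measure.dirac 1 + ENNReal.ofReal (1 - p) • Measure.dirac (-1)

section SignMeasure

variable {p : ℝ}

lemma isProbabilityMeasure_signMeasure (hp : p ∈ Set.Icc (0 : ℝ) 1) :
    IsProbabilityMeasure (signMeasure p) := by
  constructor
  simp [signMeasure, ← ENNReal.ofReal_add hp.1 (sub_nonneg.2 hp.2)]

lemma integral_signMeasure (f : ℝ → ℝ) (hp : p ∈ Set.Icc (0 : ℝ) 1) :
    ∫ x, f x ∂signMeasure p = p * f 1 + (1 - p) * f (-1) := by
  rw [signMeasure, integral_add_measure, integral_smul_measure, integral_smul_measure,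
    integral_dirac, integral_dirac, ENNReal.toReal_ofReal hp.1,
    ENNReal.toReal_ofReal (sub_nonneg.2 hp.2)]
  · simp
  all_goals exact (integrable_dirac enorm_lt_top).smul_measure ENNReal.ofReal_ne_top

lemma ae_mem_Icc_signMeasure : ∀ᵐ x ∂signMeasure p, x ∈ Set.Icc (-1 : ℝ) 1 := by
  rw [signMeasure, ae_add_measure_iff]
  constructor <;> refine Measure.ae_smul_measure ((ae_dirac_iff measurableSet_Icc).2 ?_) _ <;>
    norm_num

lemma mul_exp_add_one_sub_mul_exp_neg_le_exp (hp : p ∈ Set.Icc (0 : ℝ) 1) (z : ℝ) :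
    p * exp z + (1 - p) * exp (-z) ≤ exp ((2 * p - 1) * z + z ^ 2 / 2) := by
  have := isProbabilityMeasure_signMeasure hp
  have hmean : ∫ x, x ∂signMeasure p = 2 * p - 1 := by
    rw [integral_signMeasure _ hp]; ring
  have h := (hasSubgaussianMGF_of_mem_Icc (X := id) measurable_id.aemeasurable
    (ae_mem_Icc_signMeasure (p := p))).mgf_le z
  have hconst : ((‖(1 : ℝ) - -1‖₊ / 2) ^ 2 : NNReal) = 1 := by norm_num
  simp only [mgf, id, hmean, integral_signMeasure _ hp] at h
  rw [hconst, NNReal.coe_one, one_mul] at h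
  calc p * exp z + (1 - p) * exp (-z)
      = exp ((2 * p - 1) * z) * (p * exp (z * (1 - (2 * p - 1)))
          + (1 - p) * exp (z * (-1 - (2 * p - 1)))) := by
        rw [mul_add, mul_left_comm, ← exp_add, mul_left_comm, ← exp_add]
        ring_nf
    _ ≤ exp ((2 * p - 1) * z) * exp (z ^ 2 / 2) := by gcongr
    _ = exp ((2 * p - 1) * z + z ^ 2 / 2) := (exp_add _ _).symm

lemma mul_exp_add_one_sub_mul_exp_neg_le_quadratic (hp : p ∈ Set.Icc (0 : ℝ) 1) {u : ℝ}
    (hu : |u| ≤ 1) : p * exp u + (1 - p) * exp (-u) ≤ 1 + (2 * p - 1) * u + u ^ 2 := by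
  have hexp := (abs_le.1 (abs_exp_sub_one_sub_id_le hu)).2
  have hexp_neg := (abs_le.1 (abs_exp_sub_one_sub_id_le (x := -u) (by rwa [abs_neg]))).2
  nlinarith [hp.1, hp.2]

end SignMeasure

section WorkerIntegrand

variable {p : ℝ} {r : ℕ} {z : ℝ}

lemma worker_integrand_nonneg (hp : p ∈ Set.Icc (0 : ℝ) 1) :
    0 ≤ p * (p * exp z + (1 - p) * exp (-z)) ^ r
      + (1 - p) * ((1 - p) * exp z + p * exp (-z)) ^ r := by
  have h0 := hp.1
  have h1 := sub_nonneg.2 hp.2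
  have hbase (a b : ℝ) (ha : 0 ≤ a) (hb : 0 ≤ b) : 0 ≤ a * exp z + b * exp (-z) := by
    positivity
  exact add_nonneg (mul_nonneg h0 (pow_nonneg (hbase _ _ h0 h1) _))
    (mul_nonneg h1 (pow_nonneg (hbase _ _ h1 h0) _))

lemma worker_integrand_le (hp : p ∈ Set.Icc (0 : ℝ) 1) (hrz : r * |z| ≤ 1) :
    p * (p * exp z + (1 - p) * exp (-z)) ^ r + (1 - p) * ((1 - p) * exp z + p * exp (-z)) ^ r
      ≤ exp (r * z ^ 2 / 2) * (1 + (2 * p - 1) ^ 2 * (r * z + (r * z) ^ 2)) := by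
  have hp' : 1 - p ∈ Set.Icc (0 : ℝ) 1 := ⟨sub_nonneg.2 hp.2, sub_le_self _ hp.1⟩
  have pow_le (q : ℝ) (hq : q ∈ Set.Icc (0 : ℝ) 1) :
      (q * exp z + (1 - q) * exp (-z)) ^ r ≤ exp (r * z ^ 2 / 2) * exp ((2 * q - 1) * (r * z)) := by
    rw [← exp_add]
    calc (q * exp z + (1 - q) * exp (-z)) ^ r ≤ exp ((2 * q - 1) * z + z ^ 2 / 2) ^ r := by
          refine pow_le_pow_left₀ ?_ (mul_exp_add_one_sub_mul_exp_neg_le_exp hq z) r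
          have := sub_nonneg.2 hq.2
          have := hq.1
          positivity
      _ = _ := by rw [← exp_nat_mul]; ring_nf
  have hexp_neg := pow_le (1 - p) hp'
  rw [sub_sub_cancel, show 2 * (1 - p) - 1 = -(2 * p - 1) by ring, neg_mul] at hexp_neg
  have hu : |(2 * p - 1) * (r * z)| ≤ 1 := by
    rw [abs_mul, abs_mul, Nat.abs_cast]
    exact mul_le_one₀ (abs_le.2 ⟨by linarith [hp.1], by linarith [hp.2]⟩) (by positivity) hrz
  calc _ ≤ p * (exp (r * z ^ 2 / 2) * exp ((2 * p - 1) * (r * z)))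
        + (1 - p) * (exp (r * z ^ 2 / 2) * exp (-((2 * p - 1) * (r * z)))) :=
        add_le_add (mul_le_mul_of_nonneg_left (pow_le p hp) hp.1)
          (mul_le_mul_of_nonneg_left hexp_neg hp'.1)
    _ = exp (r * z ^ 2 / 2) * (p * exp ((2 * p - 1) * (r * z))
        + (1 - p) * exp (-((2 * p - 1) * (r * z)))) := by ring
    _ ≤ exp (r * z ^ 2 / 2) * (1 + (2 * p - 1) * ((2 * p - 1) * (r * z))
        + ((2 * p - 1) * (r * z)) ^ 2) :=
        mul_le_mul_of_nonneg_left (mul_exp_add_one_sub_mul_exp_neg_le_quadratic hp hu)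
          (exp_pos _).le
    _ = _ := by ring

end WorkerIntegrand

theorem worker_mgf_bound_general {Ω : Type*} [MeasurableSpace Ω] (P : Measure Ω)
    [IsProbabilityMeasure P] (p : Ω → ℝ) (hmeas : Measurable p)
    (hp : ∀ ω, p ω ∈ Set.Icc (0:ℝ) 1) (q : ℝ)
    (hq : ∫ ω, (2 * p ω - 1) ^ 2 ∂P = q) (rh : ℕ)
    (z : ℝ) (hz : |z| ≤ 1 / (2 * rh)) :
    ∫ ω, (p ω * (p ω * Real.exp z + (1 - p ω) * Real.exp (-z)) ^ rh
        + (1 - p ω) * ((1 - p ω) * Real.exp z + p ω * Real.exp (-z)) ^ rh) ∂P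
      ≤ Real.exp (q * rh * z + (1 / 2) * (3 * q * rh ^ 2 + rh) * z ^ 2) := by
  have hrz : rh * |z| ≤ 1 := by
    calc rh * |z| ≤ rh * (1 / (2 * rh)) := by gcongr
      _ ≤ 1 := by
        rcases eq_or_ne rh 0 with h | h
        · simp [h]
        · field_simp; norm_num
  have hq0 : 0 ≤ q := hq ▸ integral_nonneg fun ω ↦ sq_nonneg _
  have hsq : Integrable (fun ω ↦ (2 * p ω - 1) ^ 2) P :=
    Integrable.of_mem_Icc 0 1 (by fun_prop)
      (ae_of_all _ fun ω ↦ ⟨sq_nonneg _, by nlinarith [(hp ω).1, (hp ω).2]⟩)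
  set A := exp (rh * z ^ 2 / 2)
  set φ := rh * z + (rh * z) ^ 2
  calc _ ≤ ∫ ω, A * (1 + (2 * p ω - 1) ^ 2 * φ) ∂P :=
        integral_mono_of_nonneg (ae_of_all _ fun ω ↦ worker_integrand_nonneg (hp ω))
          (((integrable_const 1).add (hsq.mul_const φ)).const_mul A)
          (ae_of_all _ fun ω ↦ worker_integrand_le (hp ω) hrz)
    _ = A * (1 + q * φ) := by
        rw [integral_const_mul, integral_add (integrable_const 1) (hsq.mul_const φ),
          integral_mul_const, hq]
        simp
    _ ≤ A * exp (q * φ) := by gcongr; linarith [add_one_le_exp (q * φ)]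
    _ ≤ _ := by
        rw [← exp_add, exp_le_exp]
        nlinarith [mul_nonneg hq0 (sq_nonneg (rh * z))]

/-- Key MGF lemma: if `p` is a `[0,1]`-valued random variable with `E[(2p−1)²] = q`
and `r̂` a positive integer, then for `|z| ≤ 1/(2r̂)`,
`E[p(p e^z + p̄ e^{−z})^{r̂} + p̄(p̄ e^z + p e^{−z})^{r̂}] ≤ e^{q r̂ z + (1/2)(3q r̂² + r̂) z²}`. -/
theorem worker_mgf_bound {Ω : Type*} [MeasurableSpace Ω] (P : Measure Ω)
    [IsProbabilityMeasure P] (p : Ω → ℝ) (hmeas : Measurable p)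
    (hp : ∀ ω, p ω ∈ Set.Icc (0:ℝ) 1) (q : ℝ)
    (hq : ∫ ω, (2 * p ω - 1) ^ 2 ∂P = q) (rh : ℕ) (hr : 0 < rh)
    (z : ℝ) (hz : |z| ≤ 1 / (2 * rh)) :
    ∫ ω, (p ω * (p ω * Real.exp z + (1 - p ω) * Real.exp (-z)) ^ rh
        + (1 - p ω) * ((1 - p ω) * Real.exp z + p ω * Real.exp (-z)) ^ rh) ∂P
      ≤ Real.exp (q * rh * z + (1 / 2) * (3 * q * rh ^ 2 + rh) * z ^ 2) :=
  worker_mgf_bound_general P p hmeas hp q hq rh z hz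
end

section
/- Let m^{(k)} and v^{(k)} satisfy the recursions m^{(k+1)} = ℓ̂·r̂·q·m^{(k)} and v^{(k+1)} = ℓ̂·r̂·v^{(k)} + ℓ̂·r̂·(m^{(k)})²·(1−q)(1+r̂·q), with m^{(1)} = μ·ℓ̂ and v^{(1)} = ℓ̂·(4−μ²). Then m^{(k)} = μ·ℓ̂·(ℓ̂·r̂·q)^{k−1}, and if ℓ̂·r̂·q² > 1, v^{(k)} = ℓ̂(4−μ²)(ℓ̂r̂)^{k−1} + (1−q)(1+r̂q)·μ²·ℓ̂²·(ℓ̂r̂q)^{2k−2}·(1 − 1/(ℓ̂r̂q²)^{k−1})/(ℓ̂r̂q² − 1). -/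
/-- Closed form for the mean/variance recursion of the density evolution:
with `m 1 = μℓ̂`, `v 1 = ℓ̂(4−μ²)`, `m (k+1) = ℓ̂r̂q·m k`,
`v (k+1) = ℓ̂r̂·v k + ℓ̂r̂·(m k)²(1−q)(1+r̂q)`, we have
`m k = μℓ̂(ℓ̂r̂q)^{k−1}` and, if `ℓ̂r̂q² > 1`,
`v k = ℓ̂(4−μ²)(ℓ̂r̂)^{k−1} + (1−q)(1+r̂q)μ²ℓ̂²(ℓ̂r̂q)^{2k−2}(1−1/(ℓ̂r̂q²)^{k−1})/(ℓ̂r̂q²−1)`. -/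
theorem mean_variance_closed_form (q μ : ℝ) (hq : q ∈ Set.Ioc (0:ℝ) 1)
    (hμ : μ ∈ Set.Ioc (0:ℝ) 1) (hμq : μ ^ 2 ≤ q)
    (L R : ℕ) (hL : 0 < L) (hR : 0 < R) (hthr : 1 < (L:ℝ) * R * q ^ 2)
    (me v : ℕ → ℝ)
    (hm1 : me 1 = μ * L) (hv1 : v 1 = L * (4 - μ ^ 2))
    (hm : ∀ k, 1 ≤ k → me (k + 1) = (L:ℝ) * R * q * me k)
    (hv : ∀ k, 1 ≤ k →
      v (k + 1) = (L:ℝ) * R * v k + (L:ℝ) * R * (me k) ^ 2 * (1 - q) * (1 + R * q)) :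
    ∀ k, 1 ≤ k →
      me k = μ * L * ((L:ℝ) * R * q) ^ (k - 1) ∧
      v k = (L:ℝ) * (4 - μ ^ 2) * ((L:ℝ) * R) ^ (k - 1)
        + (1 - q) * (1 + R * q) * μ ^ 2 * (L:ℝ) ^ 2 * ((L:ℝ) * R * q) ^ (2 * k - 2)
          * ((1 - 1 / ((L:ℝ) * R * q ^ 2) ^ (k - 1)) / ((L:ℝ) * R * q ^ 2 - 1)) := by
  have hq0 : (0:ℝ) < q := hq.1
  have hC0 : (0:ℝ) < (L:ℝ) * R * q ^ 2 := lt_trans one_pos hthr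
  have hCne : ((L:ℝ) * R * q ^ 2 - 1) ≠ 0 := ne_of_gt (by linarith)
  intro k hk
  induction k with
  | zero => omega
  | succ n ih =>
    rcases Nat.eq_or_lt_of_le hk with h1 | h1
    · have hn : n = 0 := by omega
      subst hn
      simp [hm1, hv1]
    · have hn : 1 ≤ n := by omega
      obtain ⟨ihm, ihv⟩ := ih hn
      obtain ⟨m, rfl⟩ : ∃ m, n = m + 1 := ⟨n - 1, by omega⟩
      simp only [show m + 1 - 1 = m from rfl, show m + 1 + 1 - 1 = m + 1 from rfl,
        show 2 * (m + 1) - 2 = 2 * m by omega,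
        show 2 * (m + 1 + 1) - 2 = 2 * m + 2 by omega] at *
      have e1 : ((L:ℝ) * R * q) ^ (2 * m) = ((L:ℝ) * R) ^ m * ((L:ℝ) * R * q ^ 2) ^ m := by
        rw [pow_mul, ← mul_pow]; congr 1; ring
      have e2 : ((L:ℝ) * R * q) ^ (2 * m + 2)
          = ((L:ℝ) * R) ^ m * ((L:ℝ) * R * q ^ 2) ^ m * ((L:ℝ) * R * q) ^ 2 := by
        rw [pow_add, e1]
      have hCpne : (((L:ℝ) * R * q ^ 2) ^ m) ≠ 0 := pow_ne_zero _ (ne_of_gt hC0)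
      constructor
      · rw [hm (m + 1) hn, ihm, pow_succ]; ring
      · rw [hv (m + 1) hn, ihv, ihm, e1, e2, pow_succ, pow_succ]
        field_simp
        ring
end
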